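/- Let q be a prime power and A = 𝔽_q[T]. For every monic irreducible polynomial P ∈ A, one has C_{P-1}(1) ≡ 0 (mod P), i.e. P divides C_{P-1}(1) in A. -/

import Mathlib

/-!
Write `C_m(x) = ∑ₖ [m]ₖ x^{q^k}`. Then `[m]₀ = m`, `[m]_{deg m}` is the leading coefficient
of `m`, and since `x ↦ x^q` is additive and fixes `𝔽_q`, comparing
`C_{T^{n+1}} = C_T ∘ C_{T^n}` with `C_{T^{n+1}} = C_{T^n} ∘ C_T` yields
`(T^{q^{k+1}} - T) [m]_{k+1} = [m]ₖ^q - [m]ₖ`.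
For `P` irreducible of degree `d` and `0 < k < d`, `P` does not divide `T^{q^k} - T` (otherwise
`d ∣ k`), so induction on `k` gives `P ∣ [P]ₖ` for all `k < d`. Hence
`C_P(1) = ∑ₖ [P]ₖ ≡ [P]_d = 1 (mod P)`, and `C_{P-1}(1) = C_P(1) - 1 ≡ 0`.
-/

open Polynomial

/-- Compositional iterates of the Carlitz polynomial `C_T(x) = T·x + x^q`, so that
`carlitzTpow F n = C_{T^n}(x) ∈ (𝔽_q[T])[x]` (here `q = Fintype.card F`). -/
noncomputable def carlitzTpow (F : Type) [Field F] [Fintype F] : ℕ → Polynomial (Polynomial F)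
  | 0 => X
  | n + 1 => (carlitzTpow F n).comp (Polynomial.C Polynomial.X * X + X ^ (Fintype.card F))

/-- The Carlitz module polynomial `C_m(x) ∈ (𝔽_q[T])[x]` for `m ∈ A = 𝔽_q[T]`:
it is determined by `𝔽_q`-linearity in `m` together with
`C_{T^n}(x) = C_T(C_T(⋯ C_T(x)⋯))` (`n`-fold composition of `C_T(x) = T·x + x^q`). -/
noncomputable def carlitz (F : Type) [Field F] [Fintype F] (m : Polynomial F) :
    Polynomial (Polynomial F) :=
  m.sum fun i c => Polynomial.C (Polynomial.C c) * carlitzTpow F i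

/-- Evaluation `C_m(α) ∈ 𝔽_q[T]` of the Carlitz polynomial `C_m(x)` at `α ∈ 𝔽_q[T]`. -/
noncomputable def carlitzEval (F : Type) [Field F] [Fintype F] (m α : Polynomial F) :
    Polynomial F :=
  (carlitz F m).eval α

open Finset FiniteField

namespace Carlitz

variable (F : Type) [Field F] [Fintype F]

local notation "q" => Fintype.card F

section Frobenius

variable {R : Type} [CommRing R] [Algebra F R]

lemma pow_card_sum {ι : Type} (s : Finset ι) (f : ι → R) :
    (∑ i ∈ s, f i) ^ q = ∑ i ∈ s, f i ^ q :=
  map_sum (frobeniusAlgHom F R) f s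

lemma pow_card_sub (a b : R) : (a - b) ^ q = a ^ q - b ^ q :=
  map_sub (frobeniusAlgHom F R) a b

lemma pow_card_add (a b : R) : (a + b) ^ q = a ^ q + b ^ q :=
  map_add (frobeniusAlgHom F R) a b

end Frobenius

/-- `carlitzTpowCoeff F n k` is the coefficient of `x^{q^k}` in `C_{T^n}(x)`. -/
noncomputable def carlitzTpowCoeff : ℕ → ℕ → F[X]
  | 0, 0 => 1
  | 0, _ + 1 => 0
  | n + 1, 0 => X * carlitzTpowCoeff n 0
  | n + 1, k + 1 => X * carlitzTpowCoeff n (k + 1) + carlitzTpowCoeff n k ^ q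

lemma carlitzTpowCoeff_zero_right (n : ℕ) : carlitzTpowCoeff F n 0 = X ^ n := by
  induction n with
  | zero => rfl
  | succ n ih => rw [carlitzTpowCoeff, ih, pow_succ']

lemma carlitzTpowCoeff_eq_zero_of_lt {n k : ℕ} (h : n < k) : carlitzTpowCoeff F n k = 0 := by
  induction n generalizing k with
  | zero => obtain ⟨k, rfl⟩ := Nat.exists_eq_succ_of_ne_zero h.ne'; rfl
  | succ n ih =>
    obtain ⟨k, rfl⟩ := Nat.exists_eq_succ_of_ne_zero (Nat.ne_zero_of_lt h)
    rw [carlitzTpowCoeff, ih (by omega), ih (by omega), mul_zero, zero_add,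
      zero_pow Fintype.card_ne_zero]

lemma carlitzTpowCoeff_self (n : ℕ) : carlitzTpowCoeff F n n = 1 := by
  induction n with
  | zero => rfl
  | succ n ih =>
    rw [carlitzTpowCoeff, ih, carlitzTpowCoeff_eq_zero_of_lt F (Nat.lt_succ_self n), mul_zero,
      zero_add, one_pow]

lemma X_pow_sub_X_mul_carlitzTpowCoeff_succ (n k : ℕ) :
    (X ^ q ^ (k + 1) - X) * carlitzTpowCoeff F n (k + 1)
      = carlitzTpowCoeff F n k ^ q - carlitzTpowCoeff F n k := by
  induction n generalizing k with
  | zero => cases k <;> simp [carlitzTpowCoeff, zero_pow Fintype.card_ne_zero]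
  | succ n ih =>
    cases k with
    | zero =>
      have ih₀ := ih 0
      rw [zero_add, pow_one] at ih₀
      simp only [carlitzTpowCoeff, zero_add, pow_one, mul_pow]
      linear_combination (X : F[X]) * ih₀
    | succ j =>
      have ih_pow := congrArg (· ^ q) (ih j)
      simp only [mul_pow, pow_card_sub, ← pow_mul, ← pow_succ] at ih_pow
      simp only [carlitzTpowCoeff, pow_card_add, mul_pow]
      linear_combination (X : F[X]) * ih (j + 1) + ih_pow

/-- `carlitzTpow` applies `C_T` innermost; this is the outermost form `C_T ∘ C_{T^n}`. -/
lemma eval_carlitzTpow_succ (n : ℕ) (α : F[X]) :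
    (carlitzTpow F (n + 1)).eval α
      = X * (carlitzTpow F n).eval α + (carlitzTpow F n).eval α ^ q := by
  induction n generalizing α with
  | zero => simp [carlitzTpow]
  | succ n ih =>
    rw [show carlitzTpow F (n + 2) = (carlitzTpow F (n + 1)).comp _ from rfl, eval_comp, ih,
      ← eval_comp]
    rfl

lemma eval_carlitzTpow {n N : ℕ} (h : n < N) (α : F[X]) :
    (carlitzTpow F n).eval α = ∑ k ∈ range N, carlitzTpowCoeff F n k * α ^ q ^ k := by
  obtain ⟨M, rfl⟩ := Nat.exists_eq_succ_of_ne_zero (Nat.ne_zero_of_lt h)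
  induction n with
  | zero =>
    rw [sum_range_succ', sum_eq_zero fun k _ => by
      rw [carlitzTpowCoeff_eq_zero_of_lt F k.succ_pos, zero_mul]]
    simp [carlitzTpow, carlitzTpowCoeff]
  | succ n ih =>
    set b := carlitzTpowCoeff F n
    have shift_lhs : ∑ k ∈ range (M + 1), b k * α ^ q ^ k
        = ∑ k ∈ range M, b (k + 1) * α ^ q ^ (k + 1) + b 0 * α := by
      rw [sum_range_succ', pow_zero, pow_one]
    have frob_lhs : ∑ k ∈ range (M + 1), (b k * α ^ q ^ k) ^ q
        = ∑ k ∈ range M, b k ^ q * α ^ q ^ (k + 1) := by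
      rw [sum_range_succ, show b M = 0 from carlitzTpowCoeff_eq_zero_of_lt F (by omega), zero_mul,
        zero_pow Fintype.card_ne_zero, add_zero]
      simp only [mul_pow, ← pow_mul, ← pow_succ]
    have shift_rhs : ∑ k ∈ range (M + 1), carlitzTpowCoeff F (n + 1) k * α ^ q ^ k
        = ∑ k ∈ range M, (X * b (k + 1) + b k ^ q) * α ^ q ^ (k + 1) + X * b 0 * α := by
      rw [sum_range_succ', pow_zero, pow_one]; rfl
    rw [eval_carlitzTpow_succ, ih (by omega), pow_card_sum, shift_lhs, frob_lhs, shift_rhs]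
    simp only [add_mul, sum_add_distrib, mul_add, mul_sum, mul_assoc]
    ring

/-- `carlitzCoeff F m k` is the coefficient of `x^{q^k}` in `C_m(x)`. -/
noncomputable def carlitzCoeff (m : F[X]) (k : ℕ) : F[X] :=
  m.sum fun i c => C c * carlitzTpowCoeff F i k

lemma carlitzEval_eq_sum {m : F[X]} {N : ℕ} (h : m.natDegree < N) (α : F[X]) :
    carlitzEval F m α = ∑ k ∈ range N, carlitzCoeff F m k * α ^ q ^ k := by
  have mem_range : ∀ i ∈ m.support, i < N := fun i hi =>
    (le_natDegree_of_mem_supp i hi).trans_lt h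
  simp only [carlitzEval, carlitz, carlitzCoeff, Polynomial.sum_def, eval_finsetSum, eval_mul,
    eval_C, sum_mul, mul_assoc]
  rw [sum_comm]
  refine sum_congr rfl fun i hi => ?_
  rw [eval_carlitzTpow F (mem_range i hi), mul_sum]

lemma carlitzCoeff_zero_right (m : F[X]) : carlitzCoeff F m 0 = m := by
  simp only [carlitzCoeff, carlitzTpowCoeff_zero_right, sum_C_mul_X_pow_eq]

lemma carlitzCoeff_natDegree (m : F[X]) : carlitzCoeff F m m.natDegree = C m.leadingCoeff := by
  rw [carlitzCoeff, Polynomial.sum_def, sum_eq_single m.natDegree]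
  · rw [carlitzTpowCoeff_self, mul_one, leadingCoeff]
  · intro i hi hne
    rw [carlitzTpowCoeff_eq_zero_of_lt F ((le_natDegree_of_mem_supp i hi).lt_of_ne hne), mul_zero]
  · intro hnot
    rw [notMem_support_iff.mp hnot, C_0, zero_mul]

lemma X_pow_sub_X_mul_carlitzCoeff_succ (m : F[X]) (k : ℕ) :
    (X ^ q ^ (k + 1) - X) * carlitzCoeff F m (k + 1)
      = carlitzCoeff F m k ^ q - carlitzCoeff F m k := by
  simp only [carlitzCoeff, Polynomial.sum_def, pow_card_sum, mul_sum, ← sum_sub_distrib, mul_pow,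
    ← C_pow, pow_card, mul_left_comm _ (C _), X_pow_sub_X_mul_carlitzTpowCoeff_succ, mul_sub]

lemma not_dvd_X_pow_card_pow_sub_X {P : F[X]} (hP : Irreducible P) {k : ℕ} (hk₀ : k ≠ 0)
    (hk : k < P.natDegree) : ¬ P ∣ X ^ q ^ k - X := by
  rw [← Nat.card_eq_fintype_card, ← hP.natDegree_dvd_iff_dvd_X_pow_card_pow_sub_X]
  exact fun hdvd => hk.not_ge (Nat.le_of_dvd (Nat.pos_of_ne_zero hk₀) hdvd)

lemma dvd_carlitzCoeff_of_lt {P : F[X]} (hP : Irreducible P) {k : ℕ} (hk : k < P.natDegree) :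
    P ∣ carlitzCoeff F P k := by
  induction k with
  | zero => rw [carlitzCoeff_zero_right]
  | succ k ih =>
    have hdvd_prod : P ∣ (X ^ q ^ (k + 1) - X) * carlitzCoeff F P (k + 1) := by
      have ih := ih (by omega)
      rw [X_pow_sub_X_mul_carlitzCoeff_succ]
      exact (dvd_pow ih Fintype.card_ne_zero).sub ih
    exact (hP.prime.dvd_or_dvd hdvd_prod).resolve_left
      (not_dvd_X_pow_card_pow_sub_X F hP k.succ_ne_zero hk)

lemma carlitz_add (m m' : F[X]) : carlitz F (m + m') = carlitz F m + carlitz F m' :=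
  sum_add_index _ _ _ (fun _ => by simp) fun _ _ _ => by simp [add_mul]

lemma carlitz_one : carlitz F 1 = X := by
  rw [← C_1, carlitz, sum_C_index (by simp)]
  simp [carlitzTpow]

end Carlitz

open Carlitz in
/-- For every monic irreducible `P ∈ 𝔽_q[T]`, one has `C_{P-1}(1) ≡ 0 (mod P)`. -/
theorem carlitz_fermat_little_one (F : Type) [Field F] [Fintype F]
    (P : Polynomial F) (hP : P.Monic) (hPirr : Irreducible P) :
    P ∣ carlitzEval F (P - 1) 1 := by
  have eval_P_eq_add : carlitzEval F P 1 = carlitzEval F (P - 1) 1 + 1 := by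
    have := congrArg (eval 1) (carlitz_add F (P - 1) 1)
    rwa [sub_add_cancel, carlitz_one, eval_add, eval_X] at this
  have eval_P_eq_sum : carlitzEval F P 1 = ∑ k ∈ range P.natDegree, carlitzCoeff F P k + 1 := by
    rw [carlitzEval_eq_sum F P.natDegree.lt_succ_self, sum_range_succ, carlitzCoeff_natDegree,
      hP.leadingCoeff]
    simp
  rw [add_left_injective 1 (eval_P_eq_add.symm.trans eval_P_eq_sum)]
  exact dvd_sum fun k hk => dvd_carlitzCoeff_of_lt F hPirr (mem_range.mp hk)
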